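/- Let n ≥ 1 and let λ, μ be partitions of length n (weakly decreasing n-tuples of nonnegative integers) with |λ| ≥ |μ|, and let k be a nonnegative integer with 2k ≥ |λ| − |μ|. Then K̃^{B_n}_{λ,μ}(q) = K^{B_n}_{λ+kκ_n, μ+kκ_n}(q), where κ_n = (1,…,1) ∈ ℤ^n. -/

import Mathlib

open Finset Polynomial

noncomputable section

/-- The standard basis vector `ε_i` of `ℚ^n` (we work in `ℚ^n` since
`ρ_{B_n}` has half-integer coordinates). -/
def eps (n : ℕ) (i : Fin n) : Fin n → ℚ := Pi.single i 1

/-- Pairs `(i,j)` with `i < j`. -/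
def pairsLt (n : ℕ) : Finset (Fin n × Fin n) :=
  Finset.univ.filter fun p => p.1 < p.2

/-- Positive roots of type `B_n`: the `ε_i - ε_j` and `ε_i + ε_j` for `i < j`,
together with the `ε_i`. -/
def RB (n : ℕ) : Finset (Fin n → ℚ) :=
  ((pairsLt n).image fun p => eps n p.1 - eps n p.2) ∪
    ((pairsLt n).image fun p => eps n p.1 + eps n p.2) ∪
      (Finset.univ.image fun i : Fin n => eps n i)

/-- The `q`-partition function of type `B_n`:
`P_q^B(β) = Σ_m q^{Σ_α m(α)}`, the sum over the (finitely many) functions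
`m : R_B^+ → ℕ` with `Σ_α m(α)·α = β`. -/
def PqB (n : ℕ) (β : Fin n → ℚ) : Polynomial ℤ :=
  ∑ᶠ m ∈ {m : (Fin n → ℚ) → ℕ |
      (∀ α, α ∉ RB n → m α = 0) ∧ ∑ α ∈ RB n, m α • α = β},
    (X : Polynomial ℤ) ^ ∑ α ∈ RB n, m α

/-- `ρ_n = (n, n-1, ..., 1)`. -/
def rho (n : ℕ) : Fin n → ℚ := fun i => (n : ℚ) - ((i : ℕ) : ℚ)

/-- `ρ_{B_n} = (n - 1/2, n - 3/2, ..., 1/2)`. -/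
def rhoB (n : ℕ) : Fin n → ℚ := fun i => (n : ℚ) - ((i : ℕ) : ℚ) - 1 / 2

/-- The restricted alternating sum
`K̃^{B_n}_{λ,μ}(q) = Σ_{σ ∈ S_n} sgn(σ) P_q^B(σ(λ+ρ_n) - (μ+ρ_n))`. -/
def KTB (n : ℕ) (lam mu : Fin n → ℚ) : Polynomial ℤ :=
  ∑ σ : Equiv.Perm (Fin n),
    (Equiv.Perm.sign σ : ℤ) •
      PqB n (fun i => (lam + rho n) (σ i) - (mu + rho n) i)

/-- The type `B_n` Kostka-Foulkes polynomial: the alternating sum over the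
hyperoctahedral group `W_{B_n}` (signed permutations, a signed permutation being
encoded as a pair `(σ, e)` acting by `v ↦ (i ↦ e i * v (σ i))`, whose determinant
is `sgn(σ) * ∏ i, e i`), with `ρ_{B_n} = (n - 1/2, ..., 1/2)`. -/
def KB (n : ℕ) (lam mu : Fin n → ℚ) : Polynomial ℤ :=
  ∑ σ : Equiv.Perm (Fin n), ∑ e : Fin n → ℤˣ,
    ((Equiv.Perm.sign σ : ℤ) * ∏ i, (e i : ℤ)) •
      PqB n (fun i => ((e i : ℤ) : ℚ) * (lam + rhoB n) (σ i) - (mu + rhoB n) i)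

/-! Since `ρ_n - ρ_{B_n} = (1/2, …, 1/2)` is invariant under `S_n`, the terms of `K^{B_n}` indexed
by unsigned permutations are exactly the terms of `K̃^{B_n}`. Every positive root has nonnegative
coordinate sum, so `P_q^B` vanishes on vectors of negative coordinate sum. A sign change at a
coordinate of `λ + kκ_n + ρ_{B_n}`, which is at least `k + 1/2`, lowers the coordinate sum
`|λ| - |μ| ≤ 2k` of the argument by at least `2k + 1`, so all other terms vanish. -/

lemma sum_nonneg_of_mem_RB {n : ℕ} {α : Fin n → ℚ} (h : α ∈ RB n) : 0 ≤ ∑ i, α i := by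
  simp only [RB, mem_union, mem_image] at h
  rcases h with (⟨p, -, rfl⟩ | ⟨p, -, rfl⟩) | ⟨i, -, rfl⟩ <;>
    simp [eps, sum_sub_distrib, sum_add_distrib]

lemma PqB_eq_zero_of_sum_neg {n : ℕ} {β : Fin n → ℚ} (h : ∑ i, β i < 0) : PqB n β = 0 := by
  suffices hempty : {m : (Fin n → ℚ) → ℕ |
      (∀ α, α ∉ RB n → m α = 0) ∧ ∑ α ∈ RB n, m α • α = β} = ∅ by
    rw [PqB, hempty, finsum_mem_empty]
  refine Set.eq_empty_of_forall_notMem fun m ⟨_, hm⟩ => h.not_ge ?_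
  calc (0 : ℚ) ≤ ∑ α ∈ RB n, (m α : ℚ) * ∑ i, α i :=
        sum_nonneg fun α hα => mul_nonneg (m α).cast_nonneg (sum_nonneg_of_mem_RB hα)
    _ = ∑ i, β i := by
        simp only [← hm, Finset.sum_apply, nsmul_eq_mul, mul_sum]
        exact sum_comm

lemma exists_eq_neg_one_of_ne_one {ι : Type*} {e : ι → ℤˣ} (he : e ≠ 1) : ∃ i, e i = -1 := by
  by_contra! h
  exact he (funext fun i => (Int.units_eq_one_or (e i)).resolve_right (h i))

lemma sum_units_mul_comp_le {R : Type*} [CommRing R] [PartialOrder R] [IsOrderedRing R]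
    {n : ℕ} (σ : Equiv.Perm (Fin n)) {e : Fin n → ℤˣ} {v : Fin n → R} (hv : ∀ j, 0 ≤ v j)
    {i₀ : Fin n} (hi₀ : e i₀ = -1) :
    ∑ i, ((e i : ℤ) : R) * v (σ i) ≤ ∑ j, v j - 2 * v (σ i₀) := by
  have hdefect : ∀ i, 0 ≤ (1 - ((e i : ℤ) : R)) * v (σ i) := fun i => by
    rcases Int.units_eq_one_or (e i) with h | h
    · simp [h]
    · simpa [h, one_add_one_eq_two] using mul_nonneg zero_le_two (hv (σ i))
  have hi₀_defect : (1 - ((e i₀ : ℤ) : R)) * v (σ i₀) = 2 * v (σ i₀) := by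
    simp [hi₀, one_add_one_eq_two]
  calc ∑ i, ((e i : ℤ) : R) * v (σ i)
      = ∑ i, v (σ i) - ∑ i, (1 - ((e i : ℤ) : R)) * v (σ i) := by
        rw [← sum_sub_distrib]
        exact sum_congr rfl fun i _ => by ring
    _ ≤ ∑ j, v j - 2 * v (σ i₀) := by
        rw [Equiv.sum_comp σ v, ← hi₀_defect]
        exact sub_le_sub_left (single_le_sum (fun i _ => hdefect i) (mem_univ i₀)) _

lemma PqB_signed_sub_eq_zero {n : ℕ} (σ : Equiv.Perm (Fin n)) {e : Fin n → ℤˣ} (he : e ≠ 1)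
    {v u : Fin n → ℚ} (hv : ∀ j, 0 ≤ v j) (hvu : ∀ j, ∑ i, v i - ∑ i, u i < 2 * v j) :
    PqB n (fun i => ((e i : ℤ) : ℚ) * v (σ i) - u i) = 0 := by
  obtain ⟨i₀, hi₀⟩ := exists_eq_neg_one_of_ne_one he
  apply PqB_eq_zero_of_sum_neg
  have := sum_units_mul_comp_le σ hv hi₀
  rw [sum_sub_distrib]
  linarith [hvu (σ i₀)]

lemma rho_eq_rhoB_add_half {n : ℕ} (i : Fin n) : rho n i = rhoB n i + 1 / 2 := by
  simp only [rho, rhoB]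
  ring

theorem Ktilde_eq_KostkaFoulkes_B_general (n : ℕ) (lam mu : Fin n → ℤ)
    (hlam0 : ∀ i, 0 ≤ lam i)
    (k : ℕ) (hk : (∑ i, lam i) - ∑ i, mu i ≤ 2 * (k : ℤ)) :
    KTB n (fun i => (lam i : ℚ)) (fun i => (mu i : ℚ)) =
      KB n (fun i => (lam i : ℚ) + (k : ℚ)) (fun i => (mu i : ℚ) + (k : ℚ)) := by
  set v : Fin n → ℚ := (fun i => (lam i : ℚ) + (k : ℚ)) + rhoB n
  set u : Fin n → ℚ := (fun i => (mu i : ℚ) + (k : ℚ)) + rhoB n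
  have hv_lb : ∀ j, (k : ℚ) + 1 / 2 ≤ v j := fun j => by
    have hj : ((j : ℕ) : ℚ) + 1 ≤ n := by exact_mod_cast j.isLt
    have hlam0j : (0 : ℚ) ≤ lam j := by exact_mod_cast hlam0 j
    simp only [v, Pi.add_apply, rhoB]
    linarith
  have hv_nonneg : ∀ j, 0 ≤ v j := fun j => by linarith [hv_lb j, k.cast_nonneg (α := ℚ)]
  have hexcess : ∀ j, ∑ i, v i - ∑ i, u i < 2 * v j := fun j => by
    have hk' : ((∑ i, lam i : ℤ) : ℚ) - (∑ i, mu i : ℤ) ≤ 2 * k := by exact_mod_cast hk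
    have hvu : ∑ i, v i - ∑ i, u i = ((∑ i, lam i : ℤ) : ℚ) - (∑ i, mu i : ℤ) := by
      simp [v, u, ← sum_sub_distrib]
    linarith [hv_lb j]
  unfold KTB KB
  refine sum_congr rfl fun σ _ => ?_
  rw [sum_eq_single_of_mem 1 (mem_univ _) fun e _ he => ?_]
  · simp only [Pi.one_apply, Units.val_one, Int.cast_one, one_mul, prod_const_one, mul_one]
    congr 2
    funext i
    simp only [Pi.add_apply, rho_eq_rhoB_add_half]
    ring
  · rw [PqB_signed_sub_eq_zero σ he hv_nonneg hexcess, smul_zero]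

/-- for partitions `λ, μ` of length `n` with `|λ| ≥ |μ|` and `2k ≥ |λ| - |μ|`,
`K̃^{B_n}_{λ,μ}(q) = K^{B_n}_{λ+kκ_n, μ+kκ_n}(q)` where `κ_n = (1,…,1)`. -/
theorem Ktilde_eq_KostkaFoulkes_B (n : ℕ) (hn : 1 ≤ n) (lam mu : Fin n → ℤ)
    (hlam : Antitone lam) (hlam0 : ∀ i, 0 ≤ lam i)
    (hmu : Antitone mu) (hmu0 : ∀ i, 0 ≤ mu i)
    (hsum : ∑ i, mu i ≤ ∑ i, lam i)
    (k : ℕ) (hk : (∑ i, lam i) - ∑ i, mu i ≤ 2 * (k : ℤ)) :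
    KTB n (fun i => (lam i : ℚ)) (fun i => (mu i : ℚ)) =
      KB n (fun i => (lam i : ℚ) + (k : ℚ)) (fun i => (mu i : ℚ) + (k : ℚ)) :=
  Ktilde_eq_KostkaFoulkes_B_general n lam mu hlam0 k hk
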